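/- Let X₁, X₂, … be i.i.d. real random variables with E X₁² < ∞, mean a = E X₁ and variance σ² = Var X₁ > 0, whose distribution has non-compact support, i.e. P(|X₁ − a| > M) > 0 for every M > 0. Fix k > 0 and suppose P(|X₁ − a| = kσ) = 0. Then p_n = P(|X₁ − x̄_n| > k s_n) converges as n → ∞ to P(|X₁ − a| > kσ), and this limit is strictly positive. -/

import Mathlib

/-!
By the strong law of large numbers, applied to `Xⱼ` and to `Xⱼ²`, almost surely `x̄ₙ → a` and
`sₙ² = (1/n)∑ Xⱼ² - x̄ₙ² → E X₁² - a² = σ²`. Hence for almost every `ω` the event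
`k sₙ < |X₁ - x̄ₙ|` eventually agrees with `kσ < |X₁ - a|` unless `|X₁ - a| = kσ`, a null event,
and dominated convergence gives `pₙ → P(|X₁ - a| > kσ)`. This limit is positive because the
support of `X₁` is not compact.
-/

open MeasureTheory ProbabilityTheory Filter Finset Topology

/-- Empirical mean `x̄ₙ = (1/n) ∑_{j<n} X_j`. -/
noncomputable def empMean {Ω : Type*} (X : ℕ → Ω → ℝ) (n : ℕ) (ω : Ω) : ℝ :=
  (∑ j ∈ Finset.range n, X j ω) / n

/-- Empirical standard deviation `sₙ = √((1/n) ∑_{j<n} (X_j - x̄ₙ)²)`. -/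
noncomputable def empStd {Ω : Type*} (X : ℕ → Ω → ℝ) (n : ℕ) (ω : Ω) : ℝ :=
  Real.sqrt ((∑ j ∈ Finset.range n, (X j ω - empMean X n ω) ^ 2) / n)

open Function

theorem Filter.Tendsto.eventually_lt_iff {ι α : Type*} [TopologicalSpace α] [LinearOrder α]
    [OrderClosedTopology α] {L : Filter ι} {f g : ι → α} {x y : α} (hf : Tendsto f L (𝓝 x))
    (hg : Tendsto g L (𝓝 y)) (hxy : x ≠ y) : ∀ᶠ i in L, (f i < g i ↔ x < y) := by
  rcases hxy.lt_or_gt with hlt | hgt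
  · filter_upwards [hf.eventually_lt hg hlt] with i hi
    exact iff_of_true hi hlt
  · filter_upwards [hg.eventually_lt hf hgt] with i hi
    exact iff_of_false hi.not_gt hgt.not_gt

namespace MeasureTheory

theorem tendsto_measure_setOf_lt_of_ae_tendsto {Ω ι α : Type*} [MeasurableSpace Ω]
    {μ : Measure Ω} [IsFiniteMeasure μ] {L : Filter ι} [L.IsCountablyGenerated]
    [TopologicalSpace α] [LinearOrder α] [OrderClosedTopology α] [SecondCountableTopology α]
    [MeasurableSpace α] [OpensMeasurableSpace α] {f g : ι → Ω → α} {f₀ g₀ : Ω → α}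
    (hf : ∀ i, Measurable (f i)) (hg : ∀ i, Measurable (g i))
    (hf₀ : Measurable f₀) (hg₀ : Measurable g₀)
    (hf_lim : ∀ᵐ ω ∂μ, Tendsto (fun i => f i ω) L (𝓝 (f₀ ω)))
    (hg_lim : ∀ᵐ ω ∂μ, Tendsto (fun i => g i ω) L (𝓝 (g₀ ω)))
    (hne : μ {ω | g₀ ω = f₀ ω} = 0) :
    Tendsto (fun i => μ {ω | f i ω < g i ω}) L (𝓝 (μ {ω | f₀ ω < g₀ ω})) := by
  refine tendsto_measure_of_ae_tendsto_indicator_of_isFiniteMeasure L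
    (measurableSet_lt hf₀ hg₀) (fun i => measurableSet_lt (hf i) (hg i)) ?_
  filter_upwards [hf_lim, hg_lim, measure_eq_zero_iff_ae_notMem.1 hne] with ω hfω hgω hω
  exact hfω.eventually_lt_iff hgω (Ne.symm hω)

end MeasureTheory

section Empirical

variable {Ω : Type*} {X : ℕ → Ω → ℝ}

theorem measurable_empMean [MeasurableSpace Ω] (hX : ∀ i, Measurable (X i)) (n : ℕ) :
    Measurable (empMean X n) :=
  (Finset.measurable_sum _ fun j _ => hX j).div_const _

theorem measurable_empStd [MeasurableSpace Ω] (hX : ∀ i, Measurable (X i)) (n : ℕ) :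
    Measurable (empStd X n) :=
  ((Finset.measurable_sum _ fun j _ =>
    ((hX j).sub (measurable_empMean hX n)).pow_const 2).div_const _).sqrt

theorem empStd_eq_sqrt_empMean_sq_sub (X : ℕ → Ω → ℝ) (n : ℕ) (ω : Ω) :
    empStd X n ω = Real.sqrt (empMean (fun j => X j ^ 2) n ω - empMean X n ω ^ 2) := by
  rcases Nat.eq_zero_or_pos n with rfl | hn
  · simp [empStd, empMean]
  have hn' : (n : ℝ) ≠ 0 := Nat.cast_ne_zero.2 hn.ne'
  have hexpand : ∑ j ∈ range n, (X j ω - empMean X n ω) ^ 2 =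
      ∑ j ∈ range n, X j ω ^ 2 - 2 * empMean X n ω * ∑ j ∈ range n, X j ω
        + n * empMean X n ω ^ 2 := by
    simp only [sub_sq, sum_add_distrib, sum_sub_distrib, sum_const, card_range, nsmul_eq_mul,
      ← sum_mul, ← mul_sum]
    ring
  rw [empStd, hexpand]
  congr 1
  simp only [empMean, Pi.pow_apply]
  field_simp
  ring

variable [MeasurableSpace Ω] {μ : Measure Ω}

theorem ae_tendsto_empMean (hint : Integrable (X 0) μ) (hindep : Pairwise ((· ⟂ᵢ[μ] ·) on X))
    (hident : ∀ i, IdentDistrib (X i) (X 0) μ μ) :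
    ∀ᵐ ω ∂μ, Tendsto (fun n => empMean X n ω) atTop (𝓝 μ[X 0]) :=
  strong_law_ae_real X hint hindep hident

theorem ae_tendsto_empStd [IsProbabilityMeasure μ] (hL2 : MemLp (X 0) 2 μ)
    (hindep : Pairwise ((· ⟂ᵢ[μ] ·) on X)) (hident : ∀ i, IdentDistrib (X i) (X 0) μ μ) :
    ∀ᵐ ω ∂μ, Tendsto (fun n => empStd X n ω) atTop (𝓝 (Real.sqrt (variance (X 0) μ))) := by
  have hsq : Measurable fun x : ℝ => x ^ 2 := measurable_id.pow_const 2
  have hmean_sq := ae_tendsto_empMean (X := fun j => X j ^ 2) hL2.integrable_sq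
    (fun i j hij => (hindep hij).comp hsq hsq) (fun i => (hident i).comp hsq)
  filter_upwards [ae_tendsto_empMean (hL2.integrable one_le_two) hindep hident, hmean_sq]
    with ω hmean hmean_sq
  simp only [empStd_eq_sqrt_empMean_sq_sub X _ ω, variance_eq_sub hL2]
  exact (hmean_sq.sub (hmean.pow 2)).sqrt

end Empirical

/-- For i.i.d. random variables with finite second moment, positive variance and
non-compact support, the outlier probability `pₙ = P(|X₁ - x̄ₙ| > k sₙ)` converges to
the strictly positive limit `P(|X₁ - a| > kσ)`. -/
theorem outlier_prob_tendsto_pos_of_finite_variance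
    {Ω : Type*} [MeasurableSpace Ω] (μ : Measure Ω) [IsProbabilityMeasure μ]
    (X : ℕ → Ω → ℝ) (hmeas : ∀ i, Measurable (X i))
    (hindep : iIndepFun X μ)
    (hident : ∀ i, IdentDistrib (X i) (X 0) μ μ)
    (hL2 : MemLp (X 0) 2 μ)
    (a σ : ℝ) (ha : a = ∫ ω, X 0 ω ∂μ)
    (hσ : σ = Real.sqrt (variance (X 0) μ)) (hσpos : 0 < σ)
    (hsupp : ∀ M > (0 : ℝ), 0 < μ {ω | M < |X 0 ω - a|})
    (k : ℝ) (hk : 0 < k)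
    (hcont : μ {ω | |X 0 ω - a| = k * σ} = 0) :
    Tendsto (fun n => μ {ω | k * empStd X n ω < |X 0 ω - empMean X n ω|})
        atTop (𝓝 (μ {ω | k * σ < |X 0 ω - a|})) ∧
      0 < μ {ω | k * σ < |X 0 ω - a|} := by
  refine ⟨?_, hsupp (k * σ) (mul_pos hk hσpos)⟩
  have hpair : Pairwise ((· ⟂ᵢ[μ] ·) on X) := fun i j hij => hindep.indepFun hij
  have hmean := ae_tendsto_empMean (hL2.integrable one_le_two) hpair hident
  have hstd := ae_tendsto_empStd hL2 hpair hident
  subst ha hσ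
  refine tendsto_measure_setOf_lt_of_ae_tendsto
    (fun n => (measurable_empStd hmeas n).const_mul k)
    (fun n => ((hmeas 0).sub (measurable_empMean hmeas n)).abs)
    measurable_const ((hmeas 0).sub measurable_const).abs ?_ ?_ hcont
  · filter_upwards [hstd] with ω hω using hω.const_mul k
  · filter_upwards [hmean] with ω hω using (tendsto_const_nhds.sub hω).abs
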